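/- Let δ ≥ 0, θ ∈ (0, π/2), λ ≥ 1, and let Y be a random variable with density p*₂,δ(y) = λ·(φ(y)/Φ(δ))·∫_{−∞}^{(δ − y sin θ)/cos θ} φ(u)·F₁,δ(u)^{λ−1} du. Then E[Y] < 0. -/

import Mathlib

open MeasureTheory ProbabilityTheory Real Set Filter

noncomputable def phi (x : ℝ) : ℝ := Real.exp (-x^2/2) / Real.sqrt (2*Real.pi)
noncomputable def Phi (x : ℝ) : ℝ := ∫ u in Set.Iic x, phi u
noncomputable def pdelta (θ δ : ℝ) (z : ℝ × ℝ) : ℝ :=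
  phi z.1 * phi z.2 * Set.indicator (Set.Ici (0:ℝ)) (fun _ => 1)
    (δ - z.1 * Real.cos θ - z.2 * Real.sin θ) / Phi δ
noncomputable def p1 (θ δ x : ℝ) : ℝ :=
  phi x * Phi ((δ - x * Real.cos θ) / Real.sin θ) / Phi δ
noncomputable def F1 (θ δ x : ℝ) : ℝ := ∫ u in Set.Iic x, p1 θ δ u
noncomputable def pstar (lam : ℕ) (θ δ : ℝ) (z : ℝ × ℝ) : ℝ :=
  (lam : ℝ) * pdelta θ δ z * F1 θ δ z.1 ^ (lam - 1)
noncomputable def p1star (lam : ℕ) (θ δ x : ℝ) : ℝ :=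
  (lam : ℝ) * p1 θ δ x * F1 θ δ x ^ (lam - 1)
noncomputable def p2star (lam : ℕ) (θ δ y : ℝ) : ℝ :=
  (lam : ℝ) * (phi y / Phi δ) *
    ∫ u in Set.Iic ((δ - y * Real.sin θ) / Real.cos θ), phi u * F1 θ δ u ^ (lam - 1)

/-!
Folding the integral at `0` gives `E[Y] = ∫_{y > 0} y (p*₂,δ(y) - p*₂,δ(-y)) dy`. As `φ` is even,
`p*₂,δ(y)` and `p*₂,δ(-y)` differ only in the upper limit `(δ ∓ y sin θ) / cos θ` of an integral
with positive integrand, so the bracket is negative for `y > 0`. Integrability of `y p*₂,δ(y)`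
comes from `p*₂,δ ≤ C φ`.
-/

lemma setIntegral_pos_of_forall_pos {X : Type*} [MeasurableSpace X] {μ : Measure X}
    {f : X → ℝ} {s : Set X} (hs : MeasurableSet s) (hf : ∀ x ∈ s, 0 < f x)
    (hfi : IntegrableOn f s μ) (hμs : 0 < μ s) : 0 < ∫ x in s, f x ∂μ := by
  rw [setIntegral_pos_iff_support_of_nonneg_ae
    ((ae_restrict_iff' hs).2 (ae_of_all _ fun x hx => (hf x hx).le)) hfi]
  rwa [inter_eq_right.2 fun x hx => Function.mem_support.2 (hf x hx).ne']

section CumulativeIntegral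

variable {f : ℝ → ℝ}

lemma setIntegral_Iic_pos (hf : ∀ x, 0 < f x) (hfi : Integrable f) (x : ℝ) :
    0 < ∫ u in Iic x, f u :=
  setIntegral_pos_of_forall_pos measurableSet_Iic (fun u _ => hf u) hfi.integrableOn
    (by simp [Real.volume_Iic])

lemma strictMono_setIntegral_Iic (hf : ∀ x, 0 < f x) (hfi : Integrable f) :
    StrictMono fun x => ∫ u in Iic x, f u := by
  intro a b hab
  have hIoc : 0 < ∫ u in Ioc a b, f u :=
    setIntegral_pos_of_forall_pos measurableSet_Ioc (fun u _ => hf u) hfi.integrableOn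
      (by simp [Real.volume_Ioc, hab])
  have hsplit : ∫ u in Iic b, f u = (∫ u in Iic a, f u) + ∫ u in Ioc a b, f u := by
    rw [← Iic_union_Ioc_eq_Iic hab.le, setIntegral_union (Iic_disjoint_Ioc le_rfl)
      measurableSet_Ioc hfi.integrableOn hfi.integrableOn]
  linarith

lemma setIntegral_Iic_le_integral (hf : ∀ x, 0 < f x) (hfi : Integrable f) (x : ℝ) :
    ∫ u in Iic x, f u ≤ ∫ u, f u :=
  setIntegral_le_integral hfi (ae_of_all _ fun u => (hf u).le)

end CumulativeIntegral

lemma integral_mul_neg_of_lt_comp_neg {f : ℝ → ℝ} (hfi : Integrable fun y => y * f y)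
    (hlt : ∀ y, 0 < y → f y < f (-y)) : ∫ y, y * f y < 0 := by
  set g : ℝ → ℝ := fun y => y * f y
  have hfold : ∫ y, g y = ∫ y in Ioi 0, (g (-y) + g y) := by
    rw [← intervalIntegral.integral_Iic_add_Ioi hfi.integrableOn hfi.integrableOn,
      integral_add hfi.comp_neg.integrableOn hfi.integrableOn, ← integral_comp_neg_Ioi, neg_zero]
  have hpos : 0 < ∫ y in Ioi 0, -(g (-y) + g y) :=
    setIntegral_pos_of_forall_pos measurableSet_Ioi
      (fun y (hy : 0 < y) => by nlinarith [hlt y hy])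
      (hfi.comp_neg.add hfi).neg.integrableOn (by simp)
  rw [integral_neg] at hpos
  exact hfold ▸ neg_pos.1 hpos

lemma integral_eq_integral_mul_of_map_eq_withDensity {Ω : Type*} [MeasurableSpace Ω]
    {P : Measure Ω} {Y : Ω → ℝ} {f : ℝ → ℝ} (hY : Measurable Y) (hf : Measurable f)
    (hf0 : ∀ y, 0 ≤ f y) (hlaw : P.map Y = volume.withDensity fun y => ENNReal.ofReal (f y)) :
    ∫ ω, Y ω ∂P = ∫ y, y * f y := by
  have hmap : ∫ ω, Y ω ∂P = ∫ y, y ∂P.map Y :=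
    (integral_map hY.aemeasurable aestronglyMeasurable_id).symm
  rw [hmap, hlaw, integral_withDensity_eq_integral_toReal_smul hf.ennreal_ofReal
    (ae_of_all _ fun _ => ENNReal.ofReal_lt_top)]
  simp only [ENNReal.toReal_ofReal (hf0 _), smul_eq_mul, mul_comm]

lemma phi_eq_gaussianPDFReal : phi = gaussianPDFReal 0 1 := by
  ext x
  simp [phi, gaussianPDFReal, div_eq_inv_mul]

lemma phi_pos (x : ℝ) : 0 < phi x :=
  phi_eq_gaussianPDFReal ▸ gaussianPDFReal_pos 0 1 x one_ne_zero

lemma phi_neg (x : ℝ) : phi (-x) = phi x := by simp [phi]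

lemma measurable_phi : Measurable phi :=
  phi_eq_gaussianPDFReal ▸ measurable_gaussianPDFReal 0 1

lemma integrable_phi : Integrable phi :=
  phi_eq_gaussianPDFReal ▸ integrable_gaussianPDFReal 0 1

lemma integral_phi : ∫ x, phi x = 1 :=
  phi_eq_gaussianPDFReal ▸ integral_gaussianPDFReal_eq_one 0 one_ne_zero

lemma integrable_mul_phi : Integrable fun x => x * phi x := by
  have h : phi = fun x => (√(2 * π))⁻¹ * rexp (-(1 / 2) * x ^ 2) := by
    ext x
    rw [phi, div_eq_inv_mul]
    ring_nf
  simpa [h, mul_left_comm] using (integrable_mul_exp_neg_mul_sq one_half_pos).const_mul (√(2 * π))⁻¹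

lemma Phi_pos (x : ℝ) : 0 < Phi x :=
  setIntegral_Iic_pos phi_pos integrable_phi x

lemma Phi_le_one (x : ℝ) : Phi x ≤ 1 :=
  integral_phi ▸ setIntegral_Iic_le_integral phi_pos integrable_phi x

lemma measurable_Phi : Measurable Phi :=
  (strictMono_setIntegral_Iic phi_pos integrable_phi).monotone.measurable

section Densities

variable (θ δ : ℝ)

lemma p1_pos (x : ℝ) : 0 < p1 θ δ x :=
  div_pos (mul_pos (phi_pos x) (Phi_pos _)) (Phi_pos δ)

lemma p1_le_phi_div (x : ℝ) : p1 θ δ x ≤ phi x / Phi δ := by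
  rw [p1]
  gcongr
  · exact (Phi_pos δ).le
  · exact mul_le_of_le_one_right (phi_pos x).le (Phi_le_one _)

lemma measurable_p1 : Measurable (p1 θ δ) :=
  (measurable_phi.mul (measurable_Phi.comp (by fun_prop))).div_const _

lemma integrable_p1 : Integrable (p1 θ δ) :=
  (integrable_phi.div_const (Phi δ)).mono' (measurable_p1 θ δ).aestronglyMeasurable
    (ae_of_all _ fun x => by
      rw [Real.norm_of_nonneg (p1_pos θ δ x).le]
      exact p1_le_phi_div θ δ x)

lemma F1_pos (x : ℝ) : 0 < F1 θ δ x :=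
  setIntegral_Iic_pos (p1_pos θ δ) (integrable_p1 θ δ) x

lemma F1_le_integral_p1 (x : ℝ) : F1 θ δ x ≤ ∫ u, p1 θ δ u :=
  setIntegral_Iic_le_integral (p1_pos θ δ) (integrable_p1 θ δ) x

lemma measurable_F1 : Measurable (F1 θ δ) :=
  (strictMono_setIntegral_Iic (p1_pos θ δ) (integrable_p1 θ δ)).monotone.measurable

variable (lam : ℕ)

lemma phi_mul_F1_pow_pos (u : ℝ) : 0 < phi u * F1 θ δ u ^ (lam - 1) :=
  mul_pos (phi_pos u) (pow_pos (F1_pos θ δ u) _)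

lemma integrable_phi_mul_F1_pow : Integrable fun u => phi u * F1 θ δ u ^ (lam - 1) :=
  (integrable_phi.mul_const ((∫ u, p1 θ δ u) ^ (lam - 1))).mono'
    (measurable_phi.mul ((measurable_F1 θ δ).pow_const _)).aestronglyMeasurable
    (ae_of_all _ fun u => by
      rw [Real.norm_of_nonneg (phi_mul_F1_pow_pos θ δ lam u).le]
      gcongr
      · exact (phi_pos u).le
      · exact (F1_pos θ δ u).le
      · exact F1_le_integral_p1 θ δ u)

lemma p2star_nonneg (y : ℝ) : 0 ≤ p2star lam θ δ y := by
  have := phi_pos y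
  have := Phi_pos δ
  have := setIntegral_Iic_pos (phi_mul_F1_pow_pos θ δ lam) (integrable_phi_mul_F1_pow θ δ lam)
    ((δ - y * sin θ) / cos θ)
  rw [p2star]
  positivity

lemma measurable_p2star : Measurable (p2star lam θ δ) :=
  ((measurable_phi.div_const _).const_mul _).mul
    ((strictMono_setIntegral_Iic (phi_mul_F1_pow_pos θ δ lam)
      (integrable_phi_mul_F1_pow θ δ lam)).monotone.measurable.comp (by fun_prop))

lemma p2star_le (y : ℝ) :
    p2star lam θ δ y ≤ lam / Phi δ * (∫ u, phi u * F1 θ δ u ^ (lam - 1)) * phi y := by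
  have hint := setIntegral_Iic_le_integral (phi_mul_F1_pow_pos θ δ lam)
    (integrable_phi_mul_F1_pow θ δ lam) ((δ - y * sin θ) / cos θ)
  have := phi_pos y
  have := Phi_pos δ
  calc p2star lam θ δ y ≤ lam * (phi y / Phi δ) * ∫ u, phi u * F1 θ δ u ^ (lam - 1) := by
        rw [p2star]; gcongr
    _ = _ := by ring

lemma integrable_mul_p2star : Integrable fun y => y * p2star lam θ δ y :=
  (integrable_mul_phi.norm.const_mul (lam / Phi δ * ∫ u, phi u * F1 θ δ u ^ (lam - 1))).mono'
    (measurable_id.mul (measurable_p2star θ δ lam)).aestronglyMeasurable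
    (ae_of_all _ fun y => by
      rw [norm_mul, norm_mul, Real.norm_of_nonneg (p2star_nonneg θ δ lam y),
        Real.norm_of_nonneg (phi_pos y).le, mul_left_comm]
      exact mul_le_mul_of_nonneg_left (p2star_le θ δ lam y) (norm_nonneg y))

lemma p2star_lt_p2star_neg {lam : ℕ} (hlam : 1 ≤ lam) (hsin : 0 < sin θ) (hcos : 0 < cos θ)
    {y : ℝ} (hy : 0 < y) : p2star lam θ δ y < p2star lam θ δ (-y) := by
  have hlim : (δ - y * sin θ) / cos θ < (δ - -y * sin θ) / cos θ := by
    gcongr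
    nlinarith
  have hfac : 0 < (lam : ℝ) * (phi y / Phi δ) :=
    mul_pos (by exact_mod_cast hlam) (div_pos (phi_pos y) (Phi_pos δ))
  rw [p2star, p2star, phi_neg]
  exact mul_lt_mul_of_pos_left
    (strictMono_setIntegral_Iic (phi_mul_F1_pow_pos θ δ lam)
      (integrable_phi_mul_F1_pow θ δ lam) hlim) hfac

end Densities

theorem stmt8_general
    {Ω : Type*} [MeasurableSpace Ω] (P : Measure Ω)
    (lam : ℕ) (hlam : 1 ≤ lam) (θ δ : ℝ)
    (hθ : θ ∈ Set.Ioo 0 (Real.pi/2))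
    (Y : Ω → ℝ) (hYm : Measurable Y)
    (hYlaw : Measure.map Y P
      = volume.withDensity (fun y => ENNReal.ofReal (p2star lam θ δ y))) :
    (∫ ω, Y ω ∂P) < 0 := by
  obtain ⟨hθ0, hθ2⟩ := hθ
  have hsin : 0 < sin θ := sin_pos_of_pos_of_lt_pi hθ0 (by linarith [pi_pos])
  have hcos : 0 < cos θ := cos_pos_of_mem_Ioo ⟨by linarith, hθ2⟩
  rw [integral_eq_integral_mul_of_map_eq_withDensity hYm (measurable_p2star θ δ lam)
    (p2star_nonneg θ δ lam) hYlaw]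
  exact integral_mul_neg_of_lt_comp_neg (integrable_mul_p2star θ δ lam)
    fun y hy => p2star_lt_p2star_neg θ δ hlam hsin hcos hy

/-- a random variable Y with density p*₂,δ has E[Y] < 0. -/
theorem stmt8
    {Ω : Type*} [MeasurableSpace Ω] (P : Measure Ω) [IsProbabilityMeasure P]
    (lam : ℕ) (hlam : 1 ≤ lam) (θ δ : ℝ)
    (hθ : θ ∈ Set.Ioo 0 (Real.pi/2)) (hδ : 0 ≤ δ)
    (Y : Ω → ℝ) (hYm : Measurable Y)
    (hYlaw : Measure.map Y P
      = volume.withDensity (fun y => ENNReal.ofReal (p2star lam θ δ y))) :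
    (∫ ω, Y ω ∂P) < 0 :=
  stmt8_general P lam hlam θ δ hθ Y hYm hYlaw
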